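/- arXiv:2008.02006 — 7 statements merged into one kernel-verified Lean document; each statement's English description precedes it below -/
import Mathlib

section
/- Let G be a simple connected graph with vertex set V = {1,...,n} and let M be the family of maximal independent sets of G. Then the union over all A in M of the intervals [A \ Int(A), A ∪ Ext(A)] equals the full power set 2^V. -/
open Finset

/-- A set of vertices is independent: no two of its vertices are adjacent. -/
def Indep {n : ℕ} (G : SimpleGraph (Fin n)) (A : Finset (Fin n)) : Prop :=
  ∀ u ∈ A, ∀ v ∈ A, ¬ G.Adj u v

instance {n : ℕ} (G : SimpleGraph (Fin n)) [DecidableRel G.Adj] (A : Finset (Fin n)) :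
    Decidable (Indep G A) := by unfold Indep; infer_instance

/-- A maximal independent set. -/
def MaxIndep {n : ℕ} (G : SimpleGraph (Fin n)) (A : Finset (Fin n)) : Prop :=
  Indep G A ∧ ∀ B, Indep G B → A ⊆ B → A = B

/-- Externally active vertices with respect to the independent set `A`:
vertices outside `A` adjacent to and greater than some vertex of `A`. -/
def ExtAct {n : ℕ} (G : SimpleGraph (Fin n)) [DecidableRel G.Adj] (A : Finset (Fin n)) :
    Finset (Fin n) :=
  univ.filter (fun v => v ∉ A ∧ ∃ a ∈ A, G.Adj v a ∧ a < v)

/-- The neighbours of `v` that can substitute `v` in `A` keeping independence. -/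
def Subs {n : ℕ} (G : SimpleGraph (Fin n)) [DecidableRel G.Adj] (A : Finset (Fin n))
    (v : Fin n) : Finset (Fin n) :=
  univ.filter (fun u => G.Adj v u ∧ Indep G (insert u (A.erase v)))

/-- Internally active vertices of `A`: vertices `v ∈ A` with `Subs v = ∅` or
`v` greater than every element of `Subs v`. -/
def IntAct {n : ℕ} (G : SimpleGraph (Fin n)) [DecidableRel G.Adj] (A : Finset (Fin n)) :
    Finset (Fin n) :=
  A.filter (fun v => ∀ u ∈ Subs G A v, u < v)

/-- The interval `[A;B]` of the Boolean lattice. -/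
def Itv {n : ℕ} (A B : Finset (Fin n)) : Set (Finset (Fin n)) :=
  {X | A ⊆ X ∧ X ⊆ B}

/-!
Given `X`, list the vertices of `X` in increasing order followed by the remaining vertices in
decreasing order, and let `A` be the first-fit maximal independent set for this order: a vertex
is taken iff none of its earlier neighbours is. Every vertex outside `A` then has an earlier
neighbour in `A`. A vertex `x ∈ X \ A` has an earlier, hence smaller, neighbour in `A`, so it is
externally active. If `a ∈ A \ X` had a substitute `u > a`, then `a` would be the only
neighbour of `u` in `A`, so `a` precedes `u`; as `a ∉ X` this forces `u < a`, a contradiction.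
-/

section FirstFit

variable {n : ℕ} (G : SimpleGraph (Fin n)) (key : Fin n → ℕ)

def IsLowerDominating (A : Finset (Fin n)) : Prop :=
  ∀ v ∉ A, ∃ a ∈ A, G.Adj a v ∧ key a < key v

def FirstFit (v : Fin n) : Prop :=
  ∀ u, key u < key v → G.Adj u v → ¬ FirstFit u
termination_by key v

theorem firstFit_iff (v : Fin n) :
    FirstFit G key v ↔ ∀ u, key u < key v → G.Adj u v → ¬ FirstFit G key u := by
  rw [FirstFit]

variable {G key}

theorem exists_indep_isLowerDominating (hkey : Function.Injective key) :
    ∃ A, Indep G A ∧ IsLowerDominating G key A := by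
  classical
  refine ⟨univ.filter (FirstFit G key), ?_, ?_⟩
  · intro u hu v hv huv
    simp only [mem_filter, mem_univ, true_and] at hu hv
    rcases (hkey.ne (G.ne_of_adj huv)).lt_or_gt with h | h
    · exact (firstFit_iff G key v).1 hv u h huv hu
    · exact (firstFit_iff G key u).1 hu v h huv.symm hv
  · intro v hv
    simp only [mem_filter, mem_univ, true_and, firstFit_iff G key v, not_forall,
      not_not] at hv
    obtain ⟨u, hlt, hadj, hu⟩ := hv
    exact ⟨u, by simpa using hu, hadj, hlt⟩

end FirstFit

theorem maxIndep_of_isLowerDominating {n : ℕ} {G : SimpleGraph (Fin n)} {key : Fin n → ℕ}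
    {A : Finset (Fin n)} (hA : Indep G A) (hdom : IsLowerDominating G key A) :
    MaxIndep G A := by
  refine ⟨hA, fun B hB hAB => hAB.antisymm fun v hvB => ?_⟩
  by_contra hvA
  obtain ⟨a, haA, hadj, -⟩ := hdom v hvA
  exact hB a (hAB haA) v hvB hadj

section SplitKey

variable {n : ℕ} (X : Finset (Fin n))

def splitKey (v : Fin n) : ℕ :=
  if v ∈ X then v.val else 2 * n - 1 - v.val

theorem splitKey_injective : Function.Injective (splitKey X) := by
  intro v w h
  have := v.isLt; have := w.isLt
  unfold splitKey at h
  split_ifs at h <;> omega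

theorem splitKey_lt_of_mem {v w : Fin n} (hw : w ∈ X) (h : splitKey X v < splitKey X w) :
    v ∈ X ∧ v < w := by
  have := v.isLt
  unfold splitKey at h
  split_ifs at h with hv <;> first | exact ⟨hv, h⟩ | omega

theorem splitKey_lt_of_not_mem {v w : Fin n} (hv : v ∉ X) (h : splitKey X v < splitKey X w) :
    w ∉ X ∧ w < v := by
  have := w.isLt
  unfold splitKey at h
  split_ifs at h with hw <;> first | omega | exact ⟨hw, by rw [Fin.lt_def]; omega⟩

end SplitKey

section Activity

variable {n : ℕ} {G : SimpleGraph (Fin n)} [DecidableRel G.Adj] {X A : Finset (Fin n)}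

theorem subset_union_extAct (hdom : IsLowerDominating G (splitKey X) A) :
    X ⊆ A ∪ ExtAct G A := by
  intro x hxX
  rw [mem_union]
  by_cases hxA : x ∈ A
  · exact Or.inl hxA
  obtain ⟨a, haA, hadj, hlt⟩ := hdom x hxA
  exact Or.inr <| mem_filter.2
    ⟨mem_univ x, hxA, a, haA, hadj.symm, (splitKey_lt_of_mem X hxX hlt).2⟩

theorem sdiff_intAct_subset (hA : Indep G A) (hdom : IsLowerDominating G (splitKey X) A) :
    A \ IntAct G A ⊆ X := by
  intro a ha
  obtain ⟨haA, haI⟩ := mem_sdiff.1 ha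
  simp only [IntAct, mem_filter, haA, true_and, not_forall, not_lt] at haI
  obtain ⟨u, huS, hau⟩ := haI
  obtain ⟨-, hadj, hswap⟩ := mem_filter.1 huS
  have huA : u ∉ A := fun hu => hA a haA u hu hadj
  obtain ⟨b, hbA, hbu, hlt⟩ := hdom u huA
  -- `b` survives in the independent set `insert u (A.erase a)` unless `b = a`
  obtain rfl : b = a := by
    by_contra hba
    exact hswap b (mem_insert_of_mem (mem_erase.2 ⟨hba, hbA⟩)) u (mem_insert_self u _) hbu
  by_contra hbX
  exact (lt_of_le_of_ne hau (G.ne_of_adj hadj)).not_gt (splitKey_lt_of_not_mem X hbX hlt).2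

end Activity

theorem cover_theorem_general (n : ℕ) (G : SimpleGraph (Fin n)) [DecidableRel G.Adj] :
    (⋃ A ∈ {A : Finset (Fin n) | MaxIndep G A},
      Itv (A \ IntAct G A) (A ∪ ExtAct G A)) = Set.univ := by
  refine Set.eq_univ_of_forall fun X => ?_
  obtain ⟨A, hA, hdom⟩ := exists_indep_isLowerDominating (G := G) (splitKey_injective X)
  exact Set.mem_biUnion (maxIndep_of_isLowerDominating hA hdom)
    ⟨sdiff_intAct_subset hA hdom, subset_union_extAct hdom⟩

/-- The intervals generated by the maximal independent sets cover the Boolean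
lattice of the vertex set of a connected graph. -/
theorem cover_theorem (n : ℕ) (G : SimpleGraph (Fin n)) [DecidableRel G.Adj]
    (hconn : G.Connected) :
    (⋃ A ∈ {A : Finset (Fin n) | MaxIndep G A},
      Itv (A \ IntAct G A) (A ∪ ExtAct G A)) = Set.univ :=
  cover_theorem_general n G
end

section
/- Every finite graph G with vertex set {1,...,n} has a unique externally complete maximal independent set, i.e., a unique maximal independent set S with Ext(S) = V \ S. -/
open Finset

/-!
A set `S` is an externally complete maximal independent set exactly when, for every vertex `v`,
`v ∈ S` iff no smaller neighbour of `v` lies in `S`: independence gives one implication, external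
activity of every vertex outside `S` the other, and maximality then comes for free. This is the
greedy (lexicographically first) maximal independent set, which exists by well-founded recursion
and is unique by strong induction on the vertices.
-/

section Greedy

variable {V : Type*} [LinearOrder V] (G : SimpleGraph V)

/-- The greedy, i.e. lexicographically first, maximal independent set. -/
def IsGreedyIndepSet (S : Set V) : Prop :=
  ∀ v, v ∈ S ↔ ∀ u ∈ S, u < v → ¬ G.Adj u v

variable [WellFoundedLT V]

noncomputable def greedyIndepSet : Set V :=
  {v | wellFounded_lt.fix (fun v rec => ∀ u (h : u < v), rec u h → ¬ G.Adj u v) v}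

theorem isGreedyIndepSet_greedyIndepSet : IsGreedyIndepSet G (greedyIndepSet G) := fun v => by
  simp only [greedyIndepSet, Set.mem_ofPred_eq]
  rw [WellFounded.fix_eq]
  exact ⟨fun h u hu huv => h u huv hu, fun h u huv hu => h u hu huv⟩

variable {G}

theorem IsGreedyIndepSet.eq {S T : Set V} (hS : IsGreedyIndepSet G S) (hT : IsGreedyIndepSet G T) :
    S = T := by
  ext v
  induction v using WellFoundedLT.induction with
  | _ v ih =>
    rw [hS v, hT v]
    exact ⟨fun h u hu huv => h u ((ih u huv).2 hu) huv,
      fun h u hu huv => h u ((ih u huv).1 hu) huv⟩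

end Greedy

section FinGraph

variable {n : ℕ} {G : SimpleGraph (Fin n)} [DecidableRel G.Adj] {S : Finset (Fin n)}

theorem extAct_eq_compl_iff :
    ExtAct G S = Sᶜ ↔ ∀ v ∉ S, ∃ a ∈ S, G.Adj v a ∧ a < v := by
  simp only [Finset.ext_iff, ExtAct, mem_filter, mem_univ, true_and, mem_compl]
  exact forall_congr' fun v =>
    ⟨fun h hv => (h.2 hv).2, fun h => ⟨And.left, fun hv => ⟨hv, h hv⟩⟩⟩

theorem maxIndep_of_extAct_eq_compl (hS : Indep G S) (hext : ExtAct G S = Sᶜ) :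
    MaxIndep G S := by
  refine ⟨hS, fun B hB hSB => hSB.antisymm fun v hvB => ?_⟩
  by_contra hvS
  obtain ⟨a, haS, hva, -⟩ := extAct_eq_compl_iff.1 hext v hvS
  exact hB v hvB a (hSB haS) hva

theorem isGreedyIndepSet_iff_indep_and_extAct_eq_compl :
    IsGreedyIndepSet G (S : Set (Fin n)) ↔ Indep G S ∧ ExtAct G S = Sᶜ := by
  rw [extAct_eq_compl_iff]
  constructor
  · intro hS
    refine ⟨fun u hu v hv huv => ?_, fun v hv => ?_⟩
    · rcases lt_or_gt_of_ne huv.ne with h | h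
      · exact (hS v).1 hv u hu h huv
      · exact (hS u).1 hu v hv h huv.symm
    · by_contra h
      exact hv ((hS v).2 fun a haS hav hadj => h ⟨a, haS, hadj.symm, hav⟩)
  · rintro ⟨hind, hext⟩ v
    refine ⟨fun hv u hu _ => hind u hu v hv, fun h => ?_⟩
    by_contra hv
    obtain ⟨a, haS, hva, hav⟩ := hext v hv
    exact h a haS hav hva.symm

theorem maxIndep_and_extAct_eq_compl_iff :
    MaxIndep G S ∧ ExtAct G S = Sᶜ ↔ IsGreedyIndepSet G (S : Set (Fin n)) := by
  rw [isGreedyIndepSet_iff_indep_and_extAct_eq_compl]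
  exact ⟨fun h => ⟨h.1.1, h.2⟩, fun h => ⟨maxIndep_of_extAct_eq_compl h.1 h.2, h.2⟩⟩

end FinGraph

/-- Every graph has a unique externally complete maximal independent set. -/
theorem exists_unique_externally_complete (n : ℕ) (G : SimpleGraph (Fin n))
    [DecidableRel G.Adj] :
    ∃! S : Finset (Fin n), MaxIndep G S ∧ ExtAct G S = Sᶜ := by
  have hS : IsGreedyIndepSet G ((Set.toFinite (greedyIndepSet G)).toFinset : Set (Fin n)) := by
    simpa only [Set.Finite.coe_toFinset] using isGreedyIndepSet_greedyIndepSet G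
  exact ⟨_, maxIndep_and_extAct_eq_compl_iff.2 hS,
    fun T hT => Finset.coe_injective ((maxIndep_and_extAct_eq_compl_iff.1 hT).eq hS)⟩
end

section
/- Every finite graph G with vertex set {1,...,n} contains an internally complete maximal independent set, i.e., a maximal independent set S with Int(S) = S. -/
/-! A maximum-weight independent set for a positive, strictly increasing vertex weight
(here `v ↦ v + 1`) does the job: adding a vertex would increase its weight, so it is maximal,
and exchanging `v` for a substitute `u > v` would increase its weight too, so every `v` is
internally active. -/

open Finset

section WeightMaximal

variable {n : ℕ} {G : SimpleGraph (Fin n)} {w : Fin n → ℕ} {S : Finset (Fin n)}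

lemma exists_indep_forall_sum_le (G : SimpleGraph (Fin n)) (w : Fin n → ℕ) :
    ∃ S, Indep G S ∧ ∀ B, Indep G B → ∑ v ∈ B, w v ≤ ∑ v ∈ S, w v := by
  classical
  obtain ⟨S, hS, hmax⟩ :=
    exists_max_image (univ.filter (Indep G)) (∑ v ∈ ·, w v) ⟨∅, by simp [Indep]⟩
  simp only [mem_filter, mem_univ, true_and] at hS hmax
  exact ⟨S, hS, hmax⟩

lemma maxIndep_of_forall_sum_le (hw : ∀ v, 0 < w v) (hS : Indep G S)
    (hmax : ∀ B, Indep G B → ∑ v ∈ B, w v ≤ ∑ v ∈ S, w v) : MaxIndep G S := by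
  refine ⟨hS, fun B hB hSB => ?_⟩
  by_contra hne
  obtain ⟨u, huB, huS⟩ := exists_of_ssubset (hSB.ssubset_of_ne hne)
  exact (hmax B hB).not_gt
    (sum_lt_sum_of_subset hSB huB huS (hw u) fun _ _ _ => Nat.zero_le _)

lemma intAct_eq_of_forall_sum_le [DecidableRel G.Adj] (hw : StrictMono w) (hS : Indep G S)
    (hmax : ∀ B, Indep G B → ∑ v ∈ B, w v ≤ ∑ v ∈ S, w v) : IntAct G S = S := by
  refine filter_true_of_mem fun v hv u hu => ?_
  simp only [Subs, mem_filter, mem_univ, true_and] at hu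
  obtain ⟨hadj, hswap_indep⟩ := hu
  have huS : u ∉ S := fun h => hS v hv u h hadj
  have hswap : ∑ x ∈ insert u (S.erase v), w x + w v = ∑ x ∈ S, w x + w u := by
    rw [sum_insert (by simp [huS]), add_comm (w u), add_right_comm, sum_erase_add _ _ hv]
  have hwuv : w u ≤ w v := by
    have := hmax _ hswap_indep
    omega
  exact (hw.le_iff_le.mp hwuv).lt_of_ne (G.ne_of_adj hadj).symm

end WeightMaximal

/-- Every graph contains an internally complete maximal independent set. -/
theorem exists_internally_complete (n : ℕ) (G : SimpleGraph (Fin n))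
    [DecidableRel G.Adj] :
    ∃ S : Finset (Fin n), MaxIndep G S ∧ IntAct G S = S := by
  obtain ⟨S, hS, hmax⟩ := exists_indep_forall_sum_le G fun v => (v : ℕ) + 1
  exact ⟨S, maxIndep_of_forall_sum_le (fun _ => Nat.succ_pos _) hS hmax,
    intAct_eq_of_forall_sum_le (fun _ _ h => Nat.succ_lt_succ h) hS hmax⟩
end

section
/- The greedy set obtained by repeatedly selecting the largest-labeled remaining vertex and deleting its closed neighborhood is an internally complete maximal independent set. -/
open Finset

/-- The greedy procedure: repeatedly pick the greatest remaining vertex and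
delete its closed neighbourhood. -/
def greedyMax {n : ℕ} (G : SimpleGraph (Fin n)) [DecidableRel G.Adj]
    (A : Finset (Fin n)) : Finset (Fin n) :=
  if h : A.Nonempty then
    insert (A.max' h) (greedyMax G (A.filter (fun u => u ≠ A.max' h ∧ ¬ G.Adj (A.max' h) u)))
  else ∅
termination_by A.card
decreasing_by
  have hv : A.max' h ∈ A := A.max'_mem h
  have hnot : A.max' h ∉ A.filter (fun u => u ≠ A.max' h ∧ ¬ G.Adj (A.max' h) u) := by
    simp
  exact Finset.card_lt_card ⟨Finset.filter_subset _ _, fun hs => hnot (hs hv)⟩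

/-!
Every vertex `u` left out by the greedy procedure was deleted as a neighbour of an earlier
pick, and picks are made in decreasing order, so `u` has a neighbour in the greedy set that is
larger than `u`. Domination gives maximality. For internal activity, if `u` could replace `v`
in the greedy set, the larger neighbour of `u` in the greedy set can only be `v` itself.
-/

section Indep

variable {n : ℕ} {G : SimpleGraph (Fin n)}

theorem Indep.insert {S : Finset (Fin n)} {v : Fin n} (hS : Indep G S)
    (hv : ∀ u ∈ S, ¬ G.Adj v u) : Indep G (insert v S) := by
  intro a ha b hb
  rw [mem_insert] at ha hb
  rcases ha with rfl | ha <;> rcases hb with rfl | hb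
  · exact G.irrefl
  · exact hv b hb
  · exact fun hab => hv a ha hab.symm
  · exact hS a ha b hb

theorem Indep.maxIndep_of_forall_exists_adj {S : Finset (Fin n)} (hS : Indep G S)
    (hdom : ∀ u ∉ S, ∃ v ∈ S, G.Adj v u) : MaxIndep G S := by
  refine ⟨hS, fun B hB hSB => hSB.antisymm fun u hu => ?_⟩
  by_contra huS
  obtain ⟨v, hv, hvu⟩ := hdom u huS
  exact hB v (hSB hv) u hu hvu

theorem Indep.intAct_eq_self [DecidableRel G.Adj] {S : Finset (Fin n)} (hS : Indep G S)
    (hdom : ∀ u ∉ S, ∃ v ∈ S, G.Adj v u ∧ u < v) : IntAct G S = S := by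
  refine filter_true_of_mem fun v hv u hu => ?_
  obtain ⟨-, hvu, hswap⟩ := mem_filter.mp hu
  have huS : u ∉ S := fun huS => hS v hv u huS hvu
  obtain ⟨w, hw, hwu, huw⟩ := hdom u huS
  by_cases hwv : w = v
  · exact hwv ▸ huw
  · exact absurd hwu
      (hswap w (mem_insert_of_mem (mem_erase.mpr ⟨hwv, hw⟩)) u (mem_insert_self _ _))

end Indep

section Greedy

variable {n : ℕ} (G : SimpleGraph (Fin n)) [DecidableRel G.Adj]

def greedyRest (A : Finset (Fin n)) (h : A.Nonempty) : Finset (Fin n) :=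
  A.filter (fun u => u ≠ A.max' h ∧ ¬ G.Adj (A.max' h) u)

theorem greedyMax_of_nonempty {A : Finset (Fin n)} (h : A.Nonempty) :
    greedyMax G A = insert (A.max' h) (greedyMax G (greedyRest G A h)) := by
  rw [greedyMax, dif_pos h, greedyRest]

theorem greedyMax_of_not_nonempty {A : Finset (Fin n)} (h : ¬ A.Nonempty) :
    greedyMax G A = ∅ := by
  rw [greedyMax, dif_neg h]

theorem greedyRest_ssubset (A : Finset (Fin n)) (h : A.Nonempty) : greedyRest G A h ⊂ A :=
  ⟨filter_subset _ _, fun hA => by simpa [greedyRest] using hA (A.max'_mem h)⟩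

theorem greedyMax_subset (A : Finset (Fin n)) : greedyMax G A ⊆ A := by
  induction A using Finset.strongInduction with
  | H A ih =>
    by_cases h : A.Nonempty
    · rw [greedyMax_of_nonempty G h]
      exact insert_subset (A.max'_mem h)
        ((ih _ (greedyRest_ssubset G A h)).trans (filter_subset _ _))
    · simp [greedyMax_of_not_nonempty G h]

theorem indep_greedyMax (A : Finset (Fin n)) : Indep G (greedyMax G A) := by
  induction A using Finset.strongInduction with
  | H A ih =>
    by_cases h : A.Nonempty
    · rw [greedyMax_of_nonempty G h]
      refine Indep.insert (ih _ (greedyRest_ssubset G A h)) fun u hu => ?_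
      exact (mem_filter.mp (greedyMax_subset G _ hu)).2.2
    · rw [greedyMax_of_not_nonempty G h]
      simp [Indep]

theorem exists_adj_gt_of_not_mem_greedyMax {A : Finset (Fin n)} {u : Fin n} (hu : u ∈ A)
    (hu' : u ∉ greedyMax G A) : ∃ v ∈ greedyMax G A, G.Adj v u ∧ u < v := by
  induction A using Finset.strongInduction with
  | H A ih =>
    have h : A.Nonempty := ⟨u, hu⟩
    rw [greedyMax_of_nonempty G h] at hu' ⊢
    have hum : u ≠ A.max' h := fun hum => hu' (hum ▸ mem_insert_self _ _)
    by_cases hadj : G.Adj (A.max' h) u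
    · exact ⟨A.max' h, mem_insert_self _ _, hadj, lt_of_le_of_ne (A.le_max' u hu) hum⟩
    · have hrest : u ∈ greedyRest G A h := mem_filter.mpr ⟨hu, hum, hadj⟩
      obtain ⟨v, hv, hvu, huv⟩ :=
        ih _ (greedyRest_ssubset G A h) hrest (fun h' => hu' (mem_insert_of_mem h'))
      exact ⟨v, mem_insert_of_mem hv, hvu, huv⟩

end Greedy

/-- The max-greedy set is an internally complete maximal independent set. -/
theorem greedyMax_internally_complete (n : ℕ) (G : SimpleGraph (Fin n))
    [DecidableRel G.Adj] :
    MaxIndep G (greedyMax G Finset.univ) ∧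
      IntAct G (greedyMax G Finset.univ) = greedyMax G Finset.univ := by
  have hdom : ∀ u ∉ greedyMax G univ, ∃ v ∈ greedyMax G univ, G.Adj v u ∧ u < v :=
    fun _ hu => exists_adj_gt_of_not_mem_greedyMax G (mem_univ _) hu
  refine ⟨(indep_greedyMax G univ).maxIndep_of_forall_exists_adj fun u hu => ?_,
    (indep_greedyMax G univ).intAct_eq_self hdom⟩
  obtain ⟨v, hv, hvu, -⟩ := hdom u hu
  exact ⟨v, hv, hvu⟩
end

section
/- For every vertex v of a graph G there exists a maximal independent set A containing v such that either A \ Int(A) = {v} or Int(A) = A. -/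
open Finset

/-!
Among the maximal independent sets containing `v`, take one, `A`, of largest label sum. If some
`a ∈ A` other than `v` were not internally active, it would have a substitute `w > a`; extending
`(A \ {a}) ∪ {w}` to a maximal independent set keeps `v` and strictly increases the label sum.
Hence every vertex of `A` other than `v` is internally active.
-/

variable {n : ℕ} {G : SimpleGraph (Fin n)}

lemma indep_singleton (v : Fin n) : Indep G {v} := by
  simp only [Indep, mem_singleton]
  rintro _ rfl _ rfl
  exact G.irrefl

lemma Indep.exists_maxIndep_superset {A : Finset (Fin n)} (hA : Indep G A) :
    ∃ B, MaxIndep G B ∧ A ⊆ B := by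
  obtain ⟨B, hAB, hB, hBmax⟩ := Finite.exists_le_maximal (p := Indep G) hA
  exact ⟨B, ⟨hB, fun C hC hBC => hBC.antisymm (hBmax hC hBC)⟩, hAB⟩

section Subs

variable [DecidableRel G.Adj] {A : Finset (Fin n)} {a w : Fin n}

lemma exists_subs_gt_of_notMem_intAct (ha : a ∈ A) (haI : a ∉ IntAct G A) :
    ∃ w ∈ Subs G A a, a < w := by
  simp only [IntAct, mem_filter, ha, true_and, not_forall, not_lt] at haI
  obtain ⟨w, hw, haw⟩ := haI
  have hwa : w ≠ a := fun h => G.irrefl (h ▸ (mem_filter.1 hw).2.1)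
  exact ⟨w, hw, haw.lt_of_ne hwa.symm⟩

lemma Indep.notMem_of_mem_subs (hA : Indep G A) (ha : a ∈ A) (hw : w ∈ Subs G A a) :
    w ∉ A :=
  fun hwA => hA a ha w hwA (mem_filter.1 hw).2.1

end Subs

lemma sum_val_lt_sum_val_swap {A : Finset (Fin n)} {a w : Fin n} (ha : a ∈ A) (hw : w ∉ A)
    (haw : a < w) :
    ∑ x ∈ A, (x : ℕ) < ∑ x ∈ insert w (A.erase a), (x : ℕ) := by
  rw [sum_insert (fun h => hw (mem_of_mem_erase h)), ← add_sum_erase A _ ha]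
  exact Nat.add_lt_add_right haw _

lemma sdiff_intAct_subset_singleton [DecidableRel G.Adj] {A : Finset (Fin n)} {v : Fin n}
    (hA : MaxIndep G A) (hvA : v ∈ A)
    (hmax : ∀ B, MaxIndep G B → v ∈ B → ∑ x ∈ B, (x : ℕ) ≤ ∑ x ∈ A, (x : ℕ)) :
    A \ IntAct G A ⊆ {v} := by
  intro a ha
  obtain ⟨haA, haI⟩ := mem_sdiff.1 ha
  by_contra hav
  obtain ⟨w, hw, haw⟩ := exists_subs_gt_of_notMem_intAct haA haI
  obtain ⟨B, hB, hswap⟩ := (mem_filter.1 hw).2.2.exists_maxIndep_superset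
  have hvB : v ∈ B :=
    hswap (mem_insert_of_mem (mem_erase.2 ⟨Ne.symm (mt mem_singleton.2 hav), hvA⟩))
  have := calc
    ∑ x ∈ A, (x : ℕ) < ∑ x ∈ insert w (A.erase a), (x : ℕ) :=
      sum_val_lt_sum_val_swap haA (hA.1.notMem_of_mem_subs haA hw) haw
    _ ≤ ∑ x ∈ B, (x : ℕ) := sum_le_sum_of_subset hswap
  exact (hmax B hB hvB).not_gt this

/-- Every vertex lies in a maximal independent set whose set of non-internally
active vertices is either exactly that vertex or empty. -/
theorem exists_maxIndep_int_structure (n : ℕ) (G : SimpleGraph (Fin n))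
    [DecidableRel G.Adj] (v : Fin n) :
    ∃ A : Finset (Fin n), MaxIndep G A ∧ v ∈ A ∧
      (A \ IntAct G A = {v} ∨ IntAct G A = A) := by
  classical
  obtain ⟨A₀, hA₀, hvA₀⟩ := (indep_singleton (G := G) v).exists_maxIndep_superset
  obtain ⟨A, hAS, hmax⟩ := (univ.filter fun B => MaxIndep G B ∧ v ∈ B).exists_max_image
    (fun B => ∑ x ∈ B, (x : ℕ)) ⟨A₀, mem_filter.2 ⟨mem_univ _, hA₀, hvA₀ (mem_singleton_self v)⟩⟩
  obtain ⟨-, hA, hvA⟩ := mem_filter.1 hAS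
  refine ⟨A, hA, hvA, ?_⟩
  rcases subset_singleton_iff.1
      (sdiff_intAct_subset_singleton hA hvA fun B hB hvB => hmax B (by simp [hB, hvB])) with
    h | h
  · exact Or.inr ((filter_subset _ _).antisymm (sdiff_eq_empty_iff_subset.1 h))
  · exact Or.inl h
end

section
/- Let A and B be two distinct maximal independent sets of a graph G. Setting M = A \ B and N = B \ A, one has B = (A \ M) ∪ N, M ∩ N = ∅, and either N ∩ Ext(A) ≠ ∅ or M ∩ Ext(B) ≠ ∅. -/
/-!
Let `w` be the largest vertex of `A ∆ B`, say `w ∈ B \ A`. Since `A` is maximal, `w` has a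
neighbour `a ∈ A`, and `a ∉ B` because `B` is independent. Hence `a ∈ A ∆ B`, so `a < w`, and `w`
is externally active for `A`.
-/

open Finset

open scoped symmDiff

lemma MaxIndep.exists_adj_of_notMem {n : ℕ} {G : SimpleGraph (Fin n)} {A : Finset (Fin n)}
    (hA : MaxIndep G A) {v : Fin n} (hv : v ∉ A) : ∃ a ∈ A, G.Adj v a := by
  by_contra! hnadj
  have hindep : Indep G (insert v A) := by
    intro x hx y hy
    rcases mem_insert.mp hx with rfl | hxA <;> rcases mem_insert.mp hy with rfl | hyA
    · exact G.loopless.irrefl _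
    · exact hnadj y hyA
    · exact fun h => hnadj x hxA h.symm
    · exact hA.1 x hxA y hyA
  exact hv ((hA.2 _ hindep (subset_insert v A)).symm ▸ mem_insert_self v A)

lemma mem_extAct_of_forall_sdiff_le {n : ℕ} {G : SimpleGraph (Fin n)} [DecidableRel G.Adj]
    {A B : Finset (Fin n)} (hA : MaxIndep G A) (hB : Indep G B) {w : Fin n} (hw : w ∈ B \ A)
    (hmax : ∀ x ∈ A \ B, x ≤ w) : w ∈ ExtAct G A := by
  obtain ⟨hwB, hwA⟩ := mem_sdiff.mp hw
  obtain ⟨a, haA, hadj⟩ := hA.exists_adj_of_notMem hwA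
  have haB : a ∉ B := fun haB => hB w hwB a haB hadj
  have hlt : a < w := (hmax a (mem_sdiff.mpr ⟨haA, haB⟩)).lt_of_ne (ne_of_mem_of_not_mem haA hwA)
  exact mem_filter.mpr ⟨mem_univ w, hwA, a, haA, hadj, hlt⟩

/-- Two distinct maximal independent sets differ by unique disjoint sets
`M = A \ B` and `N = B \ A`, and moreover either `N` meets `ExtAct A` or `M`
meets `ExtAct B`. -/
theorem maxIndep_exchange (n : ℕ) (G : SimpleGraph (Fin n)) [DecidableRel G.Adj]
    (A B : Finset (Fin n)) (hA : MaxIndep G A) (hB : MaxIndep G B) (hne : A ≠ B) :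
    B = (A \ (A \ B)) ∪ (B \ A) ∧ Disjoint (A \ B) (B \ A) ∧
      (((B \ A) ∩ ExtAct G A).Nonempty ∨ ((A \ B) ∩ ExtAct G B).Nonempty) := by
  refine ⟨?_, disjoint_sdiff_sdiff, ?_⟩
  · ext x
    simp only [mem_union, mem_sdiff]
    tauto
  have hsymm : (A ∆ B).Nonempty := nonempty_iff_ne_empty.mpr (symmDiff_eq_bot.not.mpr hne)
  set w := (A ∆ B).max' hsymm
  have hmax : ∀ x ∈ A ∆ B, x ≤ w := fun x hx => le_max' _ x hx
  rcases mem_union.mp (max'_mem (A ∆ B) hsymm) with hw | hw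
  · refine Or.inr ⟨w, mem_inter.mpr ⟨hw, mem_extAct_of_forall_sdiff_le hB hA.1 hw ?_⟩⟩
    exact fun x hx => hmax x (mem_union_right _ hx)
  · refine Or.inl ⟨w, mem_inter.mpr ⟨hw, mem_extAct_of_forall_sdiff_le hA hB.1 hw ?_⟩⟩
    exact fun x hx => hmax x (mem_union_left _ hx)
end

section
/- For the join G = K_n + E_m, with V(K_n) = {1,...,n} and V(E_m) = {n+1,...,n+m}, the intervals generated by the maximal independent sets form a partition of 2^V: {i} generates [{i}; {i,...,n+m}] for 1 ≤ i ≤ n, and V(E_m) generates [∅; {n+1,...,n+m}]. -/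
open Finset

/-- The join of the complete graph on `{1,…,n}` with the empty graph on
`{n+1,…,n+m}`. -/
def joinKE (n m : ℕ) : SimpleGraph (Fin (n + m)) where
  Adj u v := u ≠ v ∧ ((u : ℕ) < n ∨ (v : ℕ) < n)
  symm := by
    constructor
    intro u v h
    exact ⟨h.1.symm, h.2.symm⟩
  loopless := by
    constructor
    intro u h
    exact h.1 rfl

instance (n m : ℕ) : DecidableRel (joinKE n m).Adj := fun u v =>
  inferInstanceAs (Decidable (u ≠ v ∧ ((u : ℕ) < n ∨ (v : ℕ) < n)))

/-! A vertex `i < n` of the clique dominates the graph, so `{i}` is a maximal independent set with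
no internally active vertex (the larger vertex `n` can replace it), and its externally active
vertices are all vertices above `i`. The remaining maximal independent set is the independent part
`E`; all neighbours of its vertices lie in the clique and are smaller, so `E` is entirely
internally active and has no externally active vertex. Hence a set `X` lies in `[{i}; {i,…}]`
exactly when `i = min X < n`, and in `[∅; E]` exactly when `X` avoids the clique. -/

section General

variable {k : ℕ} {G : SimpleGraph (Fin k)}

lemma eq_singleton_of_indep_of_forall_adj {A : Finset (Fin k)} {i : Fin k} (hA : Indep G A)
    (hiA : i ∈ A) (hi : ∀ v, v ≠ i → G.Adj i v) : A = {i} :=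
  eq_singleton_iff_unique_mem.mpr ⟨hiA, fun v hv => by_contra fun hne => hA i hiA v hv (hi v hne)⟩

lemma maxIndep_singleton_of_forall_adj {i : Fin k} (hi : ∀ v, v ≠ i → G.Adj i v) :
    MaxIndep G {i} := by
  refine ⟨?_, fun B hB hiB =>
    (eq_singleton_of_indep_of_forall_adj hB (hiB (mem_singleton_self i)) hi).symm⟩
  intro u hu v hv
  rw [mem_singleton] at hu hv
  subst hu hv
  exact G.loopless.irrefl _

variable [DecidableRel G.Adj]

lemma singleton_union_extAct_of_forall_adj {i : Fin k} (hi : ∀ v, v ≠ i → G.Adj i v) :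
    {i} ∪ ExtAct G {i} = univ.filter (fun v => i ≤ v) := by
  ext v
  simp only [ExtAct, mem_union, mem_singleton, mem_filter, mem_univ, true_and, exists_eq_left]
  constructor
  · rintro (rfl | ⟨-, -, hlt⟩)
    exacts [le_rfl, hlt.le]
  · intro hle
    rcases hle.eq_or_lt with rfl | hlt
    · exact Or.inl rfl
    · exact Or.inr ⟨hlt.ne', (hi v hlt.ne').symm, hlt⟩

/-- A single vertex can always be replaced by any of its neighbours, so `i` is internally
inactive as soon as it has a larger neighbour. -/
lemma intAct_singleton_eq_empty {i u : Fin k} (hiu : G.Adj i u) (hlt : i < u) :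
    IntAct G {i} = ∅ := by
  have hu : u ∈ Subs G {i} i := by
    refine mem_filter.mpr ⟨mem_univ _, hiu, ?_⟩
    rw [erase_singleton, insert_empty]
    intro a ha b hb
    rw [mem_singleton] at ha hb
    subst ha hb
    exact G.loopless.irrefl _
  rw [IntAct, filter_eq_empty_iff]
  intro v hv hall
  rw [mem_singleton] at hv
  subst hv
  exact lt_asymm hlt (hall u hu)

variable {A : Finset (Fin k)}

lemma extAct_eq_empty_of_forall_adj_lt (h : ∀ a ∈ A, ∀ v, G.Adj a v → v < a) :
    ExtAct G A = ∅ := by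
  rw [ExtAct, filter_eq_empty_iff]
  rintro v - ⟨-, a, ha, hadj, hlt⟩
  exact lt_asymm hlt (h a ha v hadj.symm)

lemma intAct_eq_self_of_forall_adj_lt (h : ∀ a ∈ A, ∀ v, G.Adj a v → v < a) :
    IntAct G A = A := by
  rw [IntAct, filter_eq_self]
  intro a ha u hu
  exact h a ha u (mem_filter.mp hu).2.1

end General

section Intervals

variable {k : ℕ}

lemma mem_Itv_singleton_iff {i : Fin k} {X : Finset (Fin k)} :
    X ∈ Itv {i} (univ.filter (fun v => i ≤ v)) ↔ i ∈ X ∧ ∀ x ∈ X, i ≤ x := by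
  simp [Itv, subset_iff]

lemma disjoint_Itv_singleton {i j : Fin k} (hij : i ≠ j) :
    Disjoint (Itv {i} (univ.filter (fun v => i ≤ v)))
      (Itv {j} (univ.filter (fun v => j ≤ v))) := by
  refine Set.disjoint_left.mpr fun X hXi hXj => hij ?_
  rw [mem_Itv_singleton_iff] at hXi hXj
  exact le_antisymm (hXi.2 j hXj.1) (hXj.2 i hXi.1)

lemma mem_Itv_empty_iff {B X : Finset (Fin k)} : X ∈ Itv ∅ B ↔ X ⊆ B := by
  simp [Itv]

end Intervals

/-- The vertex set `{n+1,…,n+m}` of `E_m` (vertices are indexed from `0` in `Fin (n + m)`). -/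
def emptyPart (n m : ℕ) : Finset (Fin (n + m)) :=
  univ.filter (fun u => n ≤ (u : ℕ))

section Join

variable {n m : ℕ}

lemma joinKE_adj_of_lt {i : Fin (n + m)} (hi : (i : ℕ) < n) (v : Fin (n + m)) (hv : v ≠ i) :
    (joinKE n m).Adj i v :=
  ⟨hv.symm, Or.inl hi⟩

lemma joinKE_adj_lt_of_mem_emptyPart {a : Fin (n + m)} (ha : a ∈ emptyPart n m)
    (v : Fin (n + m)) (hadj : (joinKE n m).Adj a v) : v < a := by
  simp only [emptyPart, mem_filter, mem_univ, true_and] at ha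
  rw [Fin.lt_def]
  rcases hadj.2 with h | h <;> omega

lemma maxIndep_emptyPart (hm : 0 < m) : MaxIndep (joinKE n m) (emptyPart n m) := by
  refine ⟨fun u hu v hv hadj => lt_asymm (joinKE_adj_lt_of_mem_emptyPart hu v hadj)
    (joinKE_adj_lt_of_mem_emptyPart hv u hadj.symm), fun B hB hsub => ?_⟩
  refine hsub.antisymm fun u hu => ?_
  simp only [emptyPart, mem_filter, mem_univ, true_and]
  by_contra! hun
  have hw : (⟨n, by omega⟩ : Fin (n + m)) ∈ B := hsub (by simp [emptyPart])
  exact hB u hu _ hw (joinKE_adj_of_lt hun _ (Fin.ne_of_val_ne (by simp; omega)))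

lemma maxIndep_joinKE_iff (hm : 0 < m) {A : Finset (Fin (n + m))} :
    MaxIndep (joinKE n m) A ↔
      (∃ i : Fin (n + m), (i : ℕ) < n ∧ A = {i}) ∨ A = emptyPart n m := by
  constructor
  · rintro ⟨hI, hM⟩
    by_cases h : ∃ i ∈ A, (i : ℕ) < n
    · obtain ⟨i, hiA, hi⟩ := h
      exact Or.inl ⟨i, hi, eq_singleton_of_indep_of_forall_adj hI hiA (joinKE_adj_of_lt hi)⟩
    · push Not at h
      exact Or.inr (hM _ (maxIndep_emptyPart hm).1 fun u hu => by simpa [emptyPart] using h u hu)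
  · rintro (⟨i, hi, rfl⟩ | rfl)
    exacts [maxIndep_singleton_of_forall_adj (joinKE_adj_of_lt hi), maxIndep_emptyPart hm]

lemma intAct_joinKE_singleton (hm : 0 < m) {i : Fin (n + m)} (hi : (i : ℕ) < n) :
    IntAct (joinKE n m) {i} = ∅ := by
  have hlt : i < ⟨n, by omega⟩ := Fin.lt_def.mpr hi
  exact intAct_singleton_eq_empty (joinKE_adj_of_lt hi _ hlt.ne') hlt

lemma Itv_joinKE_singleton (hm : 0 < m) {i : Fin (n + m)} (hi : (i : ℕ) < n) :
    Itv ({i} \ IntAct (joinKE n m) {i}) ({i} ∪ ExtAct (joinKE n m) {i}) =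
      Itv {i} (univ.filter (fun v => i ≤ v)) := by
  rw [intAct_joinKE_singleton hm hi, sdiff_empty,
    singleton_union_extAct_of_forall_adj (joinKE_adj_of_lt hi)]

lemma emptyPart_sdiff_intAct : emptyPart n m \ IntAct (joinKE n m) (emptyPart n m) = ∅ := by
  rw [intAct_eq_self_of_forall_adj_lt fun _ => joinKE_adj_lt_of_mem_emptyPart, sdiff_self,
    bot_eq_empty]

lemma emptyPart_union_extAct :
    emptyPart n m ∪ ExtAct (joinKE n m) (emptyPart n m) = emptyPart n m := by
  rw [extAct_eq_empty_of_forall_adj_lt fun _ => joinKE_adj_lt_of_mem_emptyPart, union_empty]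

lemma Itv_joinKE_emptyPart :
    Itv (emptyPart n m \ IntAct (joinKE n m) (emptyPart n m))
      (emptyPart n m ∪ ExtAct (joinKE n m) (emptyPart n m)) = Itv ∅ (emptyPart n m) := by
  rw [emptyPart_sdiff_intAct, emptyPart_union_extAct]

/-- A set meeting the clique lies in the interval of its minimum; any other set lies in `[∅; E]`. -/
lemma iUnion_Itv_maxIndep_joinKE (hm : 0 < m) :
    (⋃ A ∈ {A : Finset (Fin (n + m)) | MaxIndep (joinKE n m) A},
        Itv (A \ IntAct (joinKE n m) A) (A ∪ ExtAct (joinKE n m) A)) = Set.univ := by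
  refine Set.eq_univ_of_forall fun X => ?_
  simp only [Set.mem_iUnion, Set.mem_ofPred_eq, exists_prop]
  by_cases h : ∃ x ∈ X, (x : ℕ) < n
  · obtain ⟨x, hxX, hx⟩ := h
    set i := X.min' ⟨x, hxX⟩
    have hi : (i : ℕ) < n := lt_of_le_of_lt (Fin.le_def.mp (X.min'_le x hxX)) hx
    refine ⟨{i}, maxIndep_singleton_of_forall_adj (joinKE_adj_of_lt hi), ?_⟩
    rw [Itv_joinKE_singleton hm hi, mem_Itv_singleton_iff]
    exact ⟨X.min'_mem _, X.min'_le⟩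
  · push Not at h
    refine ⟨_, maxIndep_emptyPart hm, ?_⟩
    rw [Itv_joinKE_emptyPart, mem_Itv_empty_iff]
    exact fun x hx => by simpa [emptyPart] using h x hx

lemma disjoint_Itv_singleton_emptyPart {i : Fin (n + m)} (hi : (i : ℕ) < n) :
    Disjoint (Itv {i} (univ.filter (fun v => i ≤ v))) (Itv ∅ (emptyPart n m)) := by
  refine Set.disjoint_left.mpr fun X hXi hXE => ?_
  rw [mem_Itv_singleton_iff] at hXi
  rw [mem_Itv_empty_iff] at hXE
  have := hXE hXi.1
  simp only [emptyPart, mem_filter, mem_univ, true_and] at this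
  omega

lemma pairwiseDisjoint_Itv_maxIndep_joinKE (hm : 0 < m) :
    {A : Finset (Fin (n + m)) | MaxIndep (joinKE n m) A}.PairwiseDisjoint
      (fun A => Itv (A \ IntAct (joinKE n m) A) (A ∪ ExtAct (joinKE n m) A)) := by
  intro A hA B hB hAB
  rw [Set.mem_ofPred_eq, maxIndep_joinKE_iff hm] at hA hB
  simp only [Function.onFun]
  rcases hA with ⟨i, hi, rfl⟩ | rfl <;> rcases hB with ⟨j, hj, rfl⟩ | rfl
  · rw [Itv_joinKE_singleton hm hi, Itv_joinKE_singleton hm hj]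
    exact disjoint_Itv_singleton fun hij => hAB (hij ▸ rfl)
  · rw [Itv_joinKE_singleton hm hi, Itv_joinKE_emptyPart]
    exact disjoint_Itv_singleton_emptyPart hi
  · rw [Itv_joinKE_singleton hm hj, Itv_joinKE_emptyPart]
    exact (disjoint_Itv_singleton_emptyPart hj).symm
  · exact absurd rfl hAB

end Join

theorem join_complete_empty_partition_general (n m : ℕ) (hm : 0 < m) :
    (⋃ A ∈ {A : Finset (Fin (n + m)) | MaxIndep (joinKE n m) A},
        Itv (A \ IntAct (joinKE n m) A) (A ∪ ExtAct (joinKE n m) A)) = Set.univ ∧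
    ({A : Finset (Fin (n + m)) | MaxIndep (joinKE n m) A}.PairwiseDisjoint
        (fun A => Itv (A \ IntAct (joinKE n m) A) (A ∪ ExtAct (joinKE n m) A))) ∧
    (∀ i : Fin (n + m), (i : ℕ) < n →
        MaxIndep (joinKE n m) {i} ∧
        ({i} : Finset (Fin (n + m))) \ IntAct (joinKE n m) {i} = {i} ∧
        ({i} : Finset (Fin (n + m))) ∪ ExtAct (joinKE n m) {i} =
          univ.filter (fun u => i ≤ u)) ∧
    (MaxIndep (joinKE n m) (univ.filter (fun u : Fin (n + m) => n ≤ (u : ℕ))) ∧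
      (univ.filter (fun u : Fin (n + m) => n ≤ (u : ℕ))) \ IntAct (joinKE n m) (univ.filter (fun u : Fin (n + m) => n ≤ (u : ℕ))) = ∅ ∧
      (univ.filter (fun u : Fin (n + m) => n ≤ (u : ℕ))) ∪
          ExtAct (joinKE n m) (univ.filter (fun u : Fin (n + m) => n ≤ (u : ℕ))) =
        univ.filter (fun u : Fin (n + m) => n ≤ (u : ℕ))) := by
  refine ⟨iUnion_Itv_maxIndep_joinKE hm, pairwiseDisjoint_Itv_maxIndep_joinKE hm,
    fun i hi => ⟨maxIndep_singleton_of_forall_adj (joinKE_adj_of_lt hi), ?_,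
      singleton_union_extAct_of_forall_adj (joinKE_adj_of_lt hi)⟩,
    maxIndep_emptyPart hm, emptyPart_sdiff_intAct, emptyPart_union_extAct⟩
  rw [intAct_joinKE_singleton hm hi, sdiff_empty]

/-- For the join `K_n + E_m` the intervals generated by the maximal independent
sets form a partition: `{i}` generates `[{i}; {i,…,n+m}]` for `i ≤ n`, and the
independent part generates `[∅; {n+1,…,n+m}]`. -/
theorem join_complete_empty_partition (n m : ℕ) (hn : 0 < n) (hm : 0 < m) :
    (⋃ A ∈ {A : Finset (Fin (n + m)) | MaxIndep (joinKE n m) A},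
        Itv (A \ IntAct (joinKE n m) A) (A ∪ ExtAct (joinKE n m) A)) = Set.univ ∧
    ({A : Finset (Fin (n + m)) | MaxIndep (joinKE n m) A}.PairwiseDisjoint
        (fun A => Itv (A \ IntAct (joinKE n m) A) (A ∪ ExtAct (joinKE n m) A))) ∧
    (∀ i : Fin (n + m), (i : ℕ) < n →
        MaxIndep (joinKE n m) {i} ∧
        ({i} : Finset (Fin (n + m))) \ IntAct (joinKE n m) {i} = {i} ∧
        ({i} : Finset (Fin (n + m))) ∪ ExtAct (joinKE n m) {i} =
          univ.filter (fun u => i ≤ u)) ∧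
    (MaxIndep (joinKE n m) (univ.filter (fun u : Fin (n + m) => n ≤ (u : ℕ))) ∧
      (univ.filter (fun u : Fin (n + m) => n ≤ (u : ℕ))) \ IntAct (joinKE n m) (univ.filter (fun u : Fin (n + m) => n ≤ (u : ℕ))) = ∅ ∧
      (univ.filter (fun u : Fin (n + m) => n ≤ (u : ℕ))) ∪
          ExtAct (joinKE n m) (univ.filter (fun u : Fin (n + m) => n ≤ (u : ℕ))) =
        univ.filter (fun u : Fin (n + m) => n ≤ (u : ℕ))) :=
  join_complete_empty_partition_general n m hm
end
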